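/- arXiv:1707.01570 — 2 statements merged into one kernel-verified Lean document; each statement's English description precedes it below -/
import Mathlib

section
/- Let 0 < ν < 1/2 and let f = h + conj(g) be a sense-preserving harmonic mapping on 𝔻 with β*_ν(f) < ∞ and dilatation ω_f = g'/h'. Then for every z ∈ 𝔻, max{|h(z) − h(0)|, |g(z)|} ≤ β*_ν(f) · √((1+|ω_f(0)|)/(1−|ω_f(0)|)) · (1/2 − ν)^{−1}; in particular h, g, and f are bounded on 𝔻. -/
/-!
Sense-preservation makes the Jacobian `|h'|² (1 - |ω|²)` with `|ω| < 1`, and the Schwarz–Pick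
lemma for the dilatation gives `1 - |z|² ≤ (1 + |ω 0|) / (1 - |ω 0|) · (1 - |ω z|²)`. So
`β*_ν(f) ≤ M` bounds `|g'| < |h'|` by `M √((1 + |ω 0|) / (1 - |ω 0|)) (1 - |z|²) ^ (-(ν + 1/2))`.
As `ν + 1/2 < 1` this weight is integrable along each radius:
`∫₀¹ |z| (1 - t|z|) ^ (-(ν + 1/2)) dt ≤ (1/2 - ν)⁻¹`, which bounds `h - h 0` and `g`.
-/

open Complex Metric Set ComplexConjugate

lemma norm_one_sub_conj_mul_sq_sub_norm_sub_sq (a b : ℂ) :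
    ‖1 - conj a * b‖ ^ 2 - ‖b - a‖ ^ 2 = (1 - ‖a‖ ^ 2) * (1 - ‖b‖ ^ 2) := by
  simp only [Complex.sq_norm, normSq_apply, sub_re, sub_im, mul_re, mul_im, one_re, one_im,
    conj_re, conj_im]
  ring

lemma norm_sub_lt_norm_one_sub_conj_mul {a b : ℂ} (ha : ‖a‖ < 1) (hb : ‖b‖ < 1) :
    ‖b - a‖ < ‖1 - conj a * b‖ := by
  have key := norm_one_sub_conj_mul_sq_sub_norm_sub_sq a b
  rw [← sq_lt_sq₀ (norm_nonneg _) (norm_nonneg _)]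
  have ha2 : 0 < 1 - ‖a‖ ^ 2 := by nlinarith [norm_nonneg a]
  have hb2 : 0 < 1 - ‖b‖ ^ 2 := by nlinarith [norm_nonneg b]
  nlinarith [mul_pos ha2 hb2]

/-- The Schwarz lemma applied to `ω` followed by the disc automorphism sending `ω 0` to `0`. -/
theorem norm_sub_le_mul_norm_one_sub_conj_mul {ω : ℂ → ℂ} (hd : DifferentiableOn ℂ ω (ball 0 1))
    (hmaps : MapsTo ω (ball 0 1) (ball 0 1)) {z : ℂ} (hz : z ∈ ball (0 : ℂ) 1) :
    ‖ω z - ω 0‖ ≤ ‖z‖ * ‖1 - conj (ω 0) * ω z‖ := by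
  have hω : ∀ w ∈ ball (0 : ℂ) 1, ‖ω w‖ < 1 := fun w hw => mem_ball_zero_iff.mp (hmaps hw)
  have hlt : ∀ w ∈ ball (0 : ℂ) 1, ‖ω w - ω 0‖ < ‖1 - conj (ω 0) * ω w‖ := fun w hw =>
    norm_sub_lt_norm_one_sub_conj_mul (hω 0 (mem_ball_self one_pos)) (hω w hw)
  have hden : ∀ w ∈ ball (0 : ℂ) 1, 1 - conj (ω 0) * ω w ≠ 0 := fun w hw =>
    norm_pos_iff.mp ((norm_nonneg _).trans_lt (hlt w hw))
  set ψ : ℂ → ℂ := fun w => (ω w - ω 0) / (1 - conj (ω 0) * ω w)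
  have hψd : DifferentiableOn ℂ ψ (ball 0 1) :=
    (hd.sub_const _).div ((differentiableOn_const _).sub ((differentiableOn_const _).mul hd)) hden
  have hψmaps : MapsTo ψ (ball 0 1) (closedBall 0 1) := fun w hw => by
    rw [mem_closedBall_zero_iff, norm_div, div_le_one (norm_pos_iff.mpr (hden w hw))]
    exact (hlt w hw).le
  have hψz := Complex.norm_le_norm_of_mapsTo_ball hψd hψmaps (by simp [ψ]) (mem_ball_zero_iff.mp hz)
  rwa [norm_div, div_le_iff₀ (norm_pos_iff.mpr (hden z hz))] at hψz

lemma one_sub_sq_le_mul_one_sub_norm_sq {a b : ℂ} {r : ℝ} (ha : ‖a‖ < 1) (hb : ‖b‖ ≤ 1)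
    (hr₀ : 0 ≤ r) (hr₁ : r ≤ 1) (hab : ‖b - a‖ ≤ r * ‖1 - conj a * b‖) :
    1 - r ^ 2 ≤ (1 + ‖a‖) / (1 - ‖a‖) * (1 - ‖b‖ ^ 2) := by
  have key := norm_one_sub_conj_mul_sq_sub_norm_sub_sq a b
  have hden : 1 - ‖a‖ ≤ ‖1 - conj a * b‖ := by
    calc 1 - ‖a‖ ≤ 1 - ‖conj a * b‖ := by
          rw [norm_mul, RCLike.norm_conj]
          nlinarith [norm_nonneg a]
      _ ≤ ‖1 - conj a * b‖ := by simpa using norm_sub_norm_le (1 : ℂ) (conj a * b)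
  have hsq : ‖b - a‖ ^ 2 ≤ (r * ‖1 - conj a * b‖) ^ 2 := pow_le_pow_left₀ (norm_nonneg _) hab 2
  have ha₀ : 0 < 1 - ‖a‖ := by linarith
  have hden_sq : (1 - ‖a‖) ^ 2 ≤ ‖1 - conj a * b‖ ^ 2 := pow_le_pow_left₀ ha₀.le hden 2
  rw [div_mul_eq_mul_div, le_div_iff₀ ha₀]
  nlinarith [mul_le_mul_of_nonneg_left hden_sq (by nlinarith : 0 ≤ 1 - r ^ 2)]

theorem one_sub_norm_sq_le_mul_one_sub_norm_sq {ω : ℂ → ℂ} (hd : DifferentiableOn ℂ ω (ball 0 1))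
    (hmaps : MapsTo ω (ball 0 1) (ball 0 1)) {z : ℂ} (hz : z ∈ ball (0 : ℂ) 1) :
    1 - ‖z‖ ^ 2 ≤ (1 + ‖ω 0‖) / (1 - ‖ω 0‖) * (1 - ‖ω z‖ ^ 2) :=
  one_sub_sq_le_mul_one_sub_norm_sq (mem_ball_zero_iff.mp (hmaps (mem_ball_self one_pos)))
    (mem_ball_zero_iff.mp (hmaps hz)).le (norm_nonneg z) (mem_ball_zero_iff.mp hz).le
    (norm_sub_le_mul_norm_one_sub_conj_mul hd hmaps hz)

lemma norm_deriv_le_mul_one_sub_norm_rpow_neg {F : ℂ → ℂ} {s K : ℝ} (hs : 0 ≤ s)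
    (hbd : ∀ w ∈ ball (0 : ℂ) 1, ‖deriv F w‖ * (1 - ‖w‖ ^ 2) ^ s ≤ K)
    {w : ℂ} (hw : w ∈ ball (0 : ℂ) 1) :
    ‖deriv F w‖ ≤ K * (1 - ‖w‖) ^ (-s) := by
  have hw₁ : ‖w‖ < 1 := mem_ball_zero_iff.mp hw
  have hpos : 0 < 1 - ‖w‖ := by linarith
  have hle : (1 - ‖w‖) ^ s ≤ (1 - ‖w‖ ^ 2) ^ s :=
    Real.rpow_le_rpow hpos.le (by nlinarith [norm_nonneg w]) hs
  rw [Real.rpow_neg hpos.le, ← div_eq_mul_inv, le_div_iff₀ (Real.rpow_pos_of_pos hpos s)]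
  exact (mul_le_mul_of_nonneg_left hle (norm_nonneg _)).trans (hbd w hw)

theorem norm_le_of_norm_deriv_mul_rpow_le {F : ℂ → ℂ} {s K : ℝ} (hs₀ : 0 ≤ s) (hs₁ : s < 1)
    (hF : DifferentiableOn ℂ F (ball 0 1)) (hF₀ : F 0 = 0)
    (hbd : ∀ w ∈ ball (0 : ℂ) 1, ‖deriv F w‖ * (1 - ‖w‖ ^ 2) ^ s ≤ K)
    {z : ℂ} (hz : z ∈ ball (0 : ℂ) 1) :
    ‖F z‖ ≤ K * (1 - s)⁻¹ := by
  set r := ‖z‖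
  have hr₁ : r < 1 := mem_ball_zero_iff.mp hz
  have hK : 0 ≤ K := (norm_nonneg _).trans (by simpa using hbd 0 (mem_ball_self one_pos))
  have hs : 0 < 1 - s := by linarith
  have hpos : ∀ t ∈ Icc (0 : ℝ) 1, 0 < 1 - t * r := fun t ht => by
    nlinarith [ht.2, norm_nonneg z]
  have hnorm : ∀ t ∈ Icc (0 : ℝ) 1, ‖(t : ℂ) * z‖ = t * r := fun t ht => by
    rw [norm_mul, norm_real, Real.norm_of_nonneg ht.1]
  have hmem : ∀ t ∈ Icc (0 : ℝ) 1, (t : ℂ) * z ∈ ball (0 : ℂ) 1 := fun t ht => by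
    rw [mem_ball_zero_iff, hnorm t ht]; linarith [hpos t ht]
  have hf' : ∀ t ∈ Icc (0 : ℝ) 1,
      HasDerivAt (fun t : ℝ => F (t * z)) (deriv F (t * z) * z) t := fun t ht => by
    have hFd := (hF.differentiableAt (isOpen_ball.mem_nhds (hmem t ht))).hasDerivAt
    simpa using (hFd.comp (t : ℂ) (hasDerivAt_mul_const z)).comp_ofReal
  set B : ℝ → ℝ := fun t => K * (1 - s)⁻¹ * (1 - (1 - t * r) ^ (1 - s))
  have hB' : ∀ t ∈ Icc (0 : ℝ) 1, HasDerivAt B (K * r * (1 - t * r) ^ (-s)) t := fun t ht => by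
    have hlin : HasDerivAt (fun t : ℝ => 1 - t * r) (-r) t := by
      simpa using ((hasDerivAt_id t).mul_const r).const_sub 1
    refine (((hlin.rpow_const (p := 1 - s) (Or.inl (hpos t ht).ne')).const_sub 1).const_mul
      (K * (1 - s)⁻¹)).congr_deriv ?_
    rw [show 1 - s - 1 = -s by ring]
    field_simp
  have hbound := image_norm_le_of_norm_deriv_right_le_deriv_boundary'
    (f := fun t : ℝ => F (t * z)) (a := 0) (b := 1)
    (fun t ht => (hf' t ht).continuousAt.continuousWithinAt)
    (fun t ht => (hf' t (Ico_subset_Icc_self ht)).hasDerivWithinAt)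
    (by simp [B, hF₀]) (fun t ht => (hB' t ht).continuousAt.continuousWithinAt)
    (fun t ht => (hB' t (Ico_subset_Icc_self ht)).hasDerivWithinAt)
    (fun t ht => by
      have ht' := Ico_subset_Icc_self ht
      rw [norm_mul, mul_right_comm]
      have := norm_deriv_le_mul_one_sub_norm_rpow_neg hs₀ hbd (hmem t ht')
      rw [hnorm t ht'] at this
      exact mul_le_mul_of_nonneg_right this (norm_nonneg z))
    (right_mem_Icc.mpr zero_le_one)
  have hrpow : 0 ≤ (1 - r) ^ (1 - s) := Real.rpow_nonneg (by linarith) _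
  calc ‖F z‖ ≤ B 1 := by simpa using hbound
    _ ≤ K * (1 - s)⁻¹ := by
      simp only [B, one_mul]
      nlinarith [mul_nonneg hK (inv_nonneg.mpr hs.le)]

/-- The dilatation `ω_f = g' / h'` of the harmonic map `f = h + conj g`. -/
noncomputable def dilatation (h g : ℂ → ℂ) (z : ℂ) : ℂ := deriv g z / deriv h z

section SensePreserving

variable {h g : ℂ → ℂ} (hsp : ∀ z ∈ ball (0 : ℂ) 1, ‖deriv g z‖ < ‖deriv h z‖)
include hsp

lemma deriv_ne_zero_of_sensePreserving {z : ℂ} (hz : z ∈ ball (0 : ℂ) 1) : deriv h z ≠ 0 :=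
  norm_pos_iff.mp ((norm_nonneg _).trans_lt (hsp z hz))

lemma mapsTo_dilatation : MapsTo (dilatation h g) (ball 0 1) (ball 0 1) := fun z hz => by
  rw [mem_ball_zero_iff, dilatation, norm_div,
    div_lt_one (norm_pos_iff.mpr (deriv_ne_zero_of_sensePreserving hsp hz))]
  exact hsp z hz

lemma differentiableOn_dilatation (hh : DifferentiableOn ℂ h (ball 0 1))
    (hg : DifferentiableOn ℂ g (ball 0 1)) : DifferentiableOn ℂ (dilatation h g) (ball 0 1) :=
  ((hg.analyticOnNhd isOpen_ball).deriv.differentiableOn).div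
    ((hh.analyticOnNhd isOpen_ball).deriv.differentiableOn)
    fun _ hz => deriv_ne_zero_of_sensePreserving hsp hz

lemma norm_deriv_sq_sub_norm_deriv_sq {z : ℂ} (hz : z ∈ ball (0 : ℂ) 1) :
    ‖deriv h z‖ ^ 2 - ‖deriv g z‖ ^ 2 = ‖deriv h z‖ ^ 2 * (1 - ‖dilatation h g z‖ ^ 2) := by
  have hne := deriv_ne_zero_of_sensePreserving hsp hz
  rw [dilatation, norm_div]
  field_simp

theorem norm_deriv_mul_rpow_le (hh : DifferentiableOn ℂ h (ball 0 1))
    (hg : DifferentiableOn ℂ g (ball 0 1)) {ν M : ℝ}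
    (hM : ∀ z ∈ ball (0 : ℂ) 1,
      (1 - ‖z‖ ^ 2) ^ ν * Real.sqrt |‖deriv h z‖ ^ 2 - ‖deriv g z‖ ^ 2| ≤ M)
    {z : ℂ} (hz : z ∈ ball (0 : ℂ) 1) :
    ‖deriv h z‖ * (1 - ‖z‖ ^ 2) ^ (ν + 1 / 2) ≤
      M * Real.sqrt ((1 + ‖dilatation h g 0‖) / (1 - ‖dilatation h g 0‖)) := by
  have hM' := hM z hz
  set x := 1 - ‖z‖ ^ 2
  set c := (1 + ‖dilatation h g 0‖) / (1 - ‖dilatation h g 0‖)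
  set J := ‖deriv h z‖ ^ 2 - ‖deriv g z‖ ^ 2
  have hx : 0 < x := by nlinarith [mem_ball_zero_iff.mp hz, norm_nonneg z]
  have hJ : J = ‖deriv h z‖ ^ 2 * (1 - ‖dilatation h g z‖ ^ 2) :=
    norm_deriv_sq_sub_norm_deriv_sq hsp hz
  have hJ₀ : 0 ≤ J := by nlinarith [hsp z hz, norm_nonneg (deriv g z)]
  have hpick : x ≤ c * (1 - ‖dilatation h g z‖ ^ 2) :=
    one_sub_norm_sq_le_mul_one_sub_norm_sq (differentiableOn_dilatation hsp hh hg)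
      (mapsTo_dilatation hsp) hz
  have hsqrt : ‖deriv h z‖ * Real.sqrt x ≤ Real.sqrt J * Real.sqrt c := by
    rw [← Real.sqrt_mul hJ₀, ← Real.sqrt_sq (norm_nonneg (deriv h z)), ← Real.sqrt_mul (sq_nonneg _)]
    refine Real.sqrt_le_sqrt ?_
    rw [hJ]
    nlinarith [mul_le_mul_of_nonneg_left hpick (sq_nonneg ‖deriv h z‖)]
  rw [abs_of_nonneg hJ₀] at hM'
  calc ‖deriv h z‖ * x ^ (ν + 1 / 2) = x ^ ν * (‖deriv h z‖ * Real.sqrt x) := by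
        rw [Real.rpow_add hx, Real.sqrt_eq_rpow]; ring
    _ ≤ x ^ ν * (Real.sqrt J * Real.sqrt c) :=
        mul_le_mul_of_nonneg_left hsqrt (Real.rpow_nonneg hx.le _)
    _ ≤ M * Real.sqrt c := by
        rw [← mul_assoc]; exact mul_le_mul_of_nonneg_right hM' (Real.sqrt_nonneg _)

end SensePreserving

/-- For `0 < ν < 1/2`: if `f = h + conj g` is a sense-preserving harmonic mapping on
`𝔻` with `β*_ν(f) ≤ M` and dilatation `ω_f = g'/h'`, then for every `z ∈ 𝔻`,
`max{|h(z) − h(0)|, |g(z)|} ≤ M √((1+|ω_f(0)|)/(1−|ω_f(0)|)) (1/2 − ν)⁻¹`;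
in particular `h`, `g` and `f` are bounded on `𝔻`. -/
theorem bounded_for_small_nu_Bloch_type
    (ν : ℝ) (hν : 0 < ν) (hν2 : ν < 1 / 2) (h g : ℂ → ℂ)
    (hh : DifferentiableOn ℂ h (ball 0 1))
    (hg : DifferentiableOn ℂ g (ball 0 1))
    (hg0 : g 0 = 0)
    (hsp : ∀ z ∈ ball (0 : ℂ) 1, ‖deriv g z‖ < ‖deriv h z‖)
    (M : ℝ)
    (hM : ∀ z ∈ ball (0 : ℂ) 1,
      (1 - ‖z‖ ^ 2) ^ ν *
        Real.sqrt |‖deriv h z‖ ^ 2 - ‖deriv g z‖ ^ 2| ≤ M) :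
    (∀ z ∈ ball (0 : ℂ) 1,
      max (‖h z - h 0‖) (‖g z‖)
        ≤ M * Real.sqrt ((1 + ‖deriv g 0 / deriv h 0‖)
            / (1 - ‖deriv g 0 / deriv h 0‖)) * (1 / 2 - ν)⁻¹) ∧
    (∃ C : ℝ, ∀ z ∈ ball (0 : ℂ) 1,
      ‖h z‖ ≤ C ∧ ‖g z‖ ≤ C ∧
        ‖h z + (starRingEnd ℂ) (g z)‖ ≤ C) := by
  set B := M * Real.sqrt ((1 + ‖dilatation h g 0‖) / (1 - ‖dilatation h g 0‖)) * (1 / 2 - ν)⁻¹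
  have hs₀ : 0 ≤ ν + 1 / 2 := by linarith
  have hs₁ : ν + 1 / 2 < 1 := by linarith
  have hweight : (1 - (ν + 1 / 2))⁻¹ = (1 / 2 - ν)⁻¹ := by ring_nf
  have hH := fun z hz => norm_deriv_mul_rpow_le hsp hh hg hM (z := z) hz
  have hG := fun z hz => (mul_le_mul_of_nonneg_right (hsp z hz).le
    (Real.rpow_nonneg (by nlinarith [mem_ball_zero_iff.mp hz, norm_nonneg z]) _)).trans (hH z hz)
  have hh_bound : ∀ z ∈ ball (0 : ℂ) 1, ‖h z - h 0‖ ≤ B := fun z hz => by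
    have := norm_le_of_norm_deriv_mul_rpow_le hs₀ hs₁ (hh.sub_const (h 0)) (sub_self _)
      (by simpa only [deriv_sub_const] using hH) hz
    rwa [hweight] at this
  have hg_bound : ∀ z ∈ ball (0 : ℂ) 1, ‖g z‖ ≤ B := fun z hz => by
    have := norm_le_of_norm_deriv_mul_rpow_le hs₀ hs₁ hg hg0 hG hz
    rwa [hweight] at this
  refine ⟨fun z hz => max_le (hh_bound z hz) (hg_bound z hz), ‖h 0‖ + 2 * B, fun z hz => ?_⟩
  have hhz : ‖h z‖ ≤ ‖h 0‖ + B := by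
    simpa using (norm_le_norm_add_norm_sub' (h z) (h 0)).trans (by linarith [hh_bound z hz])
  have hgz := hg_bound z hz
  have hB : 0 ≤ B := (norm_nonneg _).trans hgz
  refine ⟨by linarith, by linarith [norm_nonneg (h 0)], ?_⟩
  calc ‖h z + (starRingEnd ℂ) (g z)‖ ≤ ‖h z‖ + ‖g z‖ := by
        simpa only [RCLike.norm_conj] using norm_add_le (h z) ((starRingEnd ℂ) (g z))
    _ ≤ ‖h 0‖ + 2 * B := by linarith
end

section
/- Let ν > 0 and let f = h + conj(g) be a sense-preserving harmonic mapping on 𝔻 with β*_ν(f) < ∞ and dilatation ω_f = g'/h', where h(z) = Σ_{n≥0} a_n z^n and g(z) = Σ_{n≥1} b_n z^n. Then |b_1| < |a_1| ≤ β*_ν(f)/√(1 − |ω_f(0)|²), and for every integer n ≥ 2, max{|a_n|, |b_n|} ≤ β*_ν(f) · (e/(2ν+1))^{ν+1/2} · √((1+|ω_f(0)|)/(1−|ω_f(0)|)) · (n + 2ν)^{ν−1/2}. -/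
/-!
The dilatation `ω = g'/h'` maps the disc into itself, so the Schwarz–Pick lemma gives
`1 - |ω z|² ≥ (1 - |z|²) (1 - |ω 0|) / (1 + |ω 0|)`. Since `J_f = |h'|² (1 - |ω|²)`, the bound on
`(1 - |z|²)^ν √J_f` becomes `|h' z| (1 - |z|²)^(ν + 1/2) ≤ M √((1 + |ω 0|) / (1 - |ω 0|))`, and the
same holds for `g'` because `|g'| < |h'|`. Cauchy's estimate for `h'` and `g'` on the circle of
radius `r` then bounds `n |aₙ| r^(n-1) (1 - r²)^(ν + 1/2)`; at the maximizing radius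
`r² = (n - 1)/(n + 2ν)` the remaining inequality `n + 2ν ≤ n r^(n-1) e^(ν + 1/2)` is sharp as
`n → ∞`, and follows from the Padé bound `log (1 + x) ≤ x (6 + x) / (6 + 4x)`.
For `n = 1`, `a₁ = h' 0` and `b₁ = g' 0`, and the bound is the hypothesis at `z = 0`.
-/

open Complex Metric Set
open scoped ComplexConjugate Nat NNReal

lemma Real.log_one_add_le_mul_div {x : ℝ} (hx : 0 ≤ x) :
    Real.log (1 + x) ≤ x * (6 + x) / (6 + 4 * x) := by
  set f : ℝ → ℝ := fun y ↦ y * (6 + y) / (6 + 4 * y) - Real.log (1 + y)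
  have hf : ∀ y ∈ Ici (0 : ℝ), HasDerivAt f (4 * y ^ 3 / ((1 + y) * (6 + 4 * y) ^ 2)) y := by
    intro y (hy : 0 ≤ y)
    have h₁ : 6 + 4 * y ≠ 0 := by positivity
    have h₂ : 1 + y ≠ 0 := by positivity
    refine ((((hasDerivAt_id' y).mul ((hasDerivAt_id' y).const_add 6)).div
      (((hasDerivAt_id' y).const_mul 4).const_add 6) h₁).sub
      (((hasDerivAt_id' y).const_add 1).log h₂)).congr_deriv ?_
    simp only [Pi.mul_apply]
    field_simp
    ring
  have hmono : MonotoneOn f (Ici 0) :=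
    monotoneOn_of_hasDerivWithinAt_nonneg (convex_Ici 0)
      (fun y hy ↦ (hf y hy).continuousAt.continuousWithinAt)
      (fun y hy ↦ (hf y (interior_subset hy)).hasDerivWithinAt)
      (fun y hy ↦ by have : (0 : ℝ) ≤ y := interior_subset hy; positivity)
  simpa [f] using hmono self_mem_Ici hx hx

lemma Real.log_one_add_add_mul_log_one_add_le {m t : ℝ} (hm : 1 ≤ m) (ht : 1 ≤ t) :
    Real.log (1 + (t - 1) / (m + 1)) + m / 2 * Real.log (1 + t / m) ≤ t / 2 := by
  have hm₀ : 0 < m := by linarith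
  have hm₁ : 0 < m + 1 := by linarith
  have h₁ : Real.log (1 + (t - 1) / (m + 1)) ≤
      (t - 1) * (6 * m + t + 5) / ((m + 1) * (6 * m + 4 * t + 2)) := by
    refine (Real.log_one_add_le_mul_div (div_nonneg (by linarith) hm₁.le)).trans_eq ?_
    rw [div_eq_div_iff (by positivity) (by positivity)]
    field_simp
    ring
  have h₂ : m / 2 * Real.log (1 + t / m) ≤ t * (6 * m + t) / (2 * (6 * m + 4 * t)) := by
    refine (mul_le_mul_of_nonneg_left (Real.log_one_add_le_mul_div (by positivity))
      (by positivity)).trans_eq ?_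
    field_simp
  -- In `a = m - 1`, `b = t - 1` the difference of the two sides is
  -- `18 a² (b - 1)² + 12 a ((b - 1)² (b + 5) + 1) + 4 (4 b³ + b² - 18 b + 18)`.
  have hpoly : 2 * (6 * m + 4 * t) * ((t - 1) * (6 * m + t + 5)) ≤
      6 * t ^ 2 * ((m + 1) * (3 * m + 2 * t + 1)) := by
    have ha : 0 ≤ m - 1 := by linarith
    have hb : 0 ≤ t - 1 := by linarith
    nlinarith [mul_nonneg (mul_nonneg ha ha) (sq_nonneg (t - 2)),
      mul_nonneg ha (mul_nonneg (sq_nonneg (t - 2)) (by linarith : (0 : ℝ) ≤ t + 4)),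
      mul_nonneg hb (sq_nonneg (t - 1 - 23 / 20)), sq_nonneg (t - 1 - 8 / 7)]
  have h₃ : (t - 1) * (6 * m + t + 5) / ((m + 1) * (6 * m + 4 * t + 2)) +
      t * (6 * m + t) / (2 * (6 * m + 4 * t)) ≤ t / 2 := by
    rw [div_add_div _ _ (by positivity) (by positivity),
      div_le_div_iff₀ (by positivity) (by positivity)]
    nlinarith [mul_pos hm₀ (by linarith : (0 : ℝ) < t), sq_nonneg t]
  linarith

lemma add_two_mul_le_mul_rpow_mul_exp {N ν : ℝ} (hN : 2 ≤ N) (hν : 0 ≤ ν) :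
    N + 2 * ν ≤ N * ((N - 1) / (N + 2 * ν)) ^ ((N - 1) / 2) * Real.exp (ν + 1 / 2) := by
  have key := Real.log_one_add_add_mul_log_one_add_le (m := N - 1) (t := 2 * ν + 1)
    (by linarith) (by linarith)
  have hN₀ : 0 < N := by linarith
  have hN₁ : 0 < N - 1 := by linarith
  have e₁ : 1 + (2 * ν + 1 - 1) / (N - 1 + 1) = (N + 2 * ν) / N := by field_simp; ring
  have e₂ : Real.log ((N - 1) / (N + 2 * ν)) = -Real.log (1 + (2 * ν + 1) / (N - 1)) := by
    rw [← Real.log_inv]; congr 1; field_simp; ring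
  rw [Real.rpow_def_of_pos (by positivity), mul_assoc, ← Real.exp_add, ← div_le_iff₀' hN₀,
    ← Real.log_le_iff_le_exp (by positivity), e₂, ← e₁]
  linear_combination key

lemma one_le_mul_rpow_mul_pow_mul_rpow {ν r : ℝ} {n : ℕ} (hν : 0 ≤ ν) (hn : 2 ≤ n) (hr : 0 ≤ r)
    (hr₂ : r ^ 2 = (n - 1) / (n + 2 * ν)) :
    1 ≤ (Real.exp 1 / (2 * ν + 1)) ^ (ν + 1 / 2) * ((n : ℝ) + 2 * ν) ^ (ν - 1 / 2) *
      (n * r ^ (n - 1) * (1 - r ^ 2) ^ (ν + 1 / 2)) := by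
  have hN : (2 : ℝ) ≤ n := by exact_mod_cast hn
  have hA : 0 < (n : ℝ) + 2 * ν := by linarith
  have hpow : r ^ (n - 1) = ((n - 1) / (n + 2 * ν)) ^ (((n : ℝ) - 1) / 2) := by
    rw [← hr₂, ← Real.rpow_natCast_mul hr, ← Real.rpow_natCast]
    congr 1
    push_cast [show 1 ≤ n by omega]
    ring
  have hcompl : 1 - r ^ 2 = (2 * ν + 1) / (n + 2 * ν) := by
    rw [hr₂]; field_simp; ring
  have hexp : ((n : ℝ) + 2 * ν) ^ (ν - 1 / 2) = ((n : ℝ) + 2 * ν) ^ (ν + 1 / 2) / (n + 2 * ν) := by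
    rw [← Real.rpow_sub_one hA.ne']; ring_nf
  have key := add_two_mul_le_mul_rpow_mul_exp hN hν
  have h₁ : 0 ≤ 2 * ν + 1 := by positivity
  rw [hpow, hcompl, hexp, Real.div_rpow (Real.exp_pos 1).le h₁, Real.div_rpow h₁ hA.le,
    Real.exp_one_rpow]
  generalize ((n - 1) / (n + 2 * ν)) ^ (((n : ℝ) - 1) / 2) = S at key ⊢
  have : 0 < (2 * ν + 1) ^ (ν + 1 / 2) := by positivity
  have : 0 < ((n : ℝ) + 2 * ν) ^ (ν + 1 / 2) := by positivity
  calc (1 : ℝ) ≤ n * S * Real.exp (ν + 1 / 2) / (n + 2 * ν) := (one_le_div hA).2 key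
    _ = _ := by field_simp

noncomputable def blaschkeFactor (c u : ℂ) : ℂ := (u - c) / (1 - conj c * u)

lemma one_sub_conj_mul_ne_zero {c u : ℂ} (hc : ‖c‖ < 1) (hu : ‖u‖ ≤ 1) :
    1 - conj c * u ≠ 0 := by
  rw [sub_ne_zero]
  intro h
  have : ‖conj c * u‖ < 1 := by
    rw [norm_mul, Complex.norm_conj]
    nlinarith [norm_nonneg c, norm_nonneg u]
  simp [← h] at this

lemma normSq_one_sub_conj_mul_sub_normSq_sub (c u : ℂ) :
    normSq (1 - conj c * u) - normSq (u - c) = (1 - normSq c) * (1 - normSq u) := by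
  simp only [normSq_apply, mul_re, mul_im, sub_re, sub_im, one_re, one_im, conj_re, conj_im]
  ring

lemma one_sub_sq_norm_blaschkeFactor {c u : ℂ} (hc : ‖c‖ < 1) (hu : ‖u‖ ≤ 1) :
    1 - ‖blaschkeFactor c u‖ ^ 2 = (1 - ‖c‖ ^ 2) * (1 - ‖u‖ ^ 2) / ‖1 - conj c * u‖ ^ 2 := by
  have hd : normSq (1 - conj c * u) ≠ 0 := normSq_eq_zero.not.2 (one_sub_conj_mul_ne_zero hc hu)
  simp only [blaschkeFactor, norm_div, div_pow, Complex.sq_norm]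
  rw [← normSq_one_sub_conj_mul_sub_normSq_sub, eq_div_iff hd, sub_mul, one_mul,
    div_mul_cancel₀ _ hd]

lemma norm_blaschkeFactor_lt_one {c u : ℂ} (hc : ‖c‖ < 1) (hu : ‖u‖ < 1) :
    ‖blaschkeFactor c u‖ < 1 := by
  have h := one_sub_sq_norm_blaschkeFactor hc hu.le
  have : 0 < (1 - ‖c‖ ^ 2) * (1 - ‖u‖ ^ 2) / ‖1 - conj c * u‖ ^ 2 := by
    have := one_sub_conj_mul_ne_zero hc hu.le
    have : 0 < 1 - ‖c‖ ^ 2 := by nlinarith [norm_nonneg c]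
    have : 0 < 1 - ‖u‖ ^ 2 := by nlinarith [norm_nonneg u]
    positivity
  nlinarith [norm_nonneg (blaschkeFactor c u)]

/-- The Schwarz–Pick inequality between `z` and `0`. -/
theorem one_sub_sq_norm_le_of_mapsTo_ball {ω : ℂ → ℂ} (hω : DifferentiableOn ℂ ω (ball 0 1))
    (hmaps : MapsTo ω (ball 0 1) (ball 0 1)) {z : ℂ} (hz : z ∈ ball (0 : ℂ) 1) :
    1 - ‖z‖ ^ 2 ≤ (1 - ‖ω z‖ ^ 2) * ((1 + ‖ω 0‖) / (1 - ‖ω 0‖)) := by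
  set c := ω 0
  have hc : ‖c‖ < 1 := mem_ball_zero_iff.1 (hmaps (mem_ball_self one_pos))
  have hu : ‖ω z‖ < 1 := mem_ball_zero_iff.1 (hmaps hz)
  have hschwarz : ‖blaschkeFactor c (ω z)‖ ≤ ‖z‖ := by
    refine Complex.norm_le_norm_of_mapsTo_ball (f := fun w ↦ blaschkeFactor c (ω w)) ?_ ?_
      (by simp [blaschkeFactor, c]) (mem_ball_zero_iff.1 hz)
    · exact (hω.sub_const c).div ((differentiableOn_const 1).sub (hω.const_mul _))
        fun w hw ↦ one_sub_conj_mul_ne_zero hc (mem_ball_zero_iff.1 (hmaps hw)).le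
    · exact fun w hw ↦ ball_subset_closedBall (mem_ball_zero_iff.2
        (norm_blaschkeFactor_lt_one hc (mem_ball_zero_iff.1 (hmaps hw))))
  have hden : 1 - ‖c‖ ≤ ‖1 - conj c * ω z‖ := by
    calc 1 - ‖c‖ ≤ 1 - ‖conj c * ω z‖ := by
          rw [norm_mul, Complex.norm_conj]; nlinarith [norm_nonneg c, norm_nonneg (ω z)]
      _ ≤ ‖1 - conj c * ω z‖ := by simpa using norm_sub_norm_le (1 : ℂ) (conj c * ω z)
  calc 1 - ‖z‖ ^ 2 ≤ 1 - ‖blaschkeFactor c (ω z)‖ ^ 2 := by gcongr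
    _ = (1 - ‖c‖ ^ 2) * (1 - ‖ω z‖ ^ 2) / ‖1 - conj c * ω z‖ ^ 2 :=
        one_sub_sq_norm_blaschkeFactor hc hu.le
    _ ≤ (1 - ‖c‖ ^ 2) * (1 - ‖ω z‖ ^ 2) / (1 - ‖c‖) ^ 2 := by
        have : 0 < 1 - ‖c‖ := by linarith
        have : 0 ≤ 1 - ‖ω z‖ ^ 2 := by nlinarith [norm_nonneg (ω z)]
        have : 0 ≤ 1 - ‖c‖ ^ 2 := by nlinarith [norm_nonneg c]
        gcongr
    _ = (1 - ‖ω z‖ ^ 2) * ((1 + ‖c‖) / (1 - ‖c‖)) := by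
        have : 1 - ‖c‖ ≠ 0 := by linarith
        field_simp
        ring

lemma hasFPowerSeriesOnBall_ofScalars_of_hasSum {F : ℂ → ℂ} {c : ℕ → ℂ} {R : ℝ} (hR : 0 < R)
    (hF : ∀ z ∈ ball (0 : ℂ) R, HasSum (fun n ↦ c n * z ^ n) (F z)) :
    HasFPowerSeriesOnBall F (.ofScalars ℂ c) 0 (.ofReal R) where
  r_le := by
    refine le_of_forall_lt_imp_le_of_dense fun r hr ↦ ?_
    lift r to ℝ≥0 using ne_top_of_lt hr
    apply FormalMultilinearSeries.le_radius_of_summable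
    have hr' : (r : ℝ) < R := by
      simpa using (ENNReal.lt_ofReal_iff_toReal_lt ENNReal.coe_ne_top).1 hr
    simpa [norm_mul, mul_comm] using (hF r (by simpa using hr')).summable.norm
  r_pos := by simpa using hR
  hasSum {y} hy := by
    rw [eball_ofReal] at hy
    simpa [FormalMultilinearSeries.ofScalars_apply_eq, mul_comm] using hF y hy

theorem HasFPowerSeriesAt.iteratedDeriv_eq_factorial_mul {𝕜 : Type*} [NontriviallyNormedField 𝕜]
    [CompleteSpace 𝕜] [CharZero 𝕜] {F : 𝕜 → 𝕜} {c : ℕ → 𝕜} {x : 𝕜}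
    (hF : HasFPowerSeriesAt F (.ofScalars 𝕜 c) x) (n : ℕ) :
    iteratedDeriv n F x = n ! * c n := by
  have h := congrArg (·.coeff n) (hF.eq_formalMultilinearSeries hF.analyticAt.hasFPowerSeriesAt)
  simp only [FormalMultilinearSeries.coeff_ofScalars] at h
  rw [h, mul_div_cancel₀ _ (Nat.cast_ne_zero.2 n.factorial_ne_zero)]

theorem HasFPowerSeriesOnBall.norm_coeff_mul_le_of_norm_deriv_le {F : ℂ → ℂ} {c : ℕ → ℂ}
    {R r K : ℝ} (hF : HasFPowerSeriesOnBall F (.ofScalars ℂ c) 0 (.ofReal R)) (hr : 0 < r)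
    (hrR : r < R) (hK : ∀ z ∈ sphere (0 : ℂ) r, ‖deriv F z‖ ≤ K) {n : ℕ} (hn : 1 ≤ n) :
    ‖c n‖ * (n * r ^ (n - 1)) ≤ K := by
  obtain ⟨k, rfl⟩ : ∃ k, n = k + 1 := ⟨n - 1, by omega⟩
  have hd : DiffContOnCl ℂ (deriv F) (ball 0 r) := by
    refine (hF.differentiableOn.deriv isOpen_eball).diffContOnCl_ball ?_
    rw [eball_ofReal]
    exact closedBall_subset_ball hrR
  have hcauchy := Complex.norm_iteratedDeriv_le_of_forall_mem_sphere_norm_le k hr hd hK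
  rw [← iteratedDeriv_succ', hF.hasFPowerSeriesAt.iteratedDeriv_eq_factorial_mul, norm_mul,
    Complex.norm_natCast, Nat.factorial_succ, le_div_iff₀ (by positivity)] at hcauchy
  push_cast at hcauchy ⊢
  refine le_of_mul_le_mul_left ?_ (by positivity : (0 : ℝ) < k !)
  linarith

theorem HasFPowerSeriesOnBall.norm_coeff_mul_le_of_norm_deriv_mul_rpow_le {F : ℂ → ℂ}
    {c : ℕ → ℂ} {p C : ℝ} (hF : HasFPowerSeriesOnBall F (.ofScalars ℂ c) 0 (.ofReal 1))
    (hC : ∀ z ∈ ball (0 : ℂ) 1, ‖deriv F z‖ * (1 - ‖z‖ ^ 2) ^ p ≤ C) {r : ℝ} (hr₀ : 0 < r)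
    (hr₁ : r < 1) {n : ℕ} (hn : 1 ≤ n) :
    ‖c n‖ * (n * r ^ (n - 1) * (1 - r ^ 2) ^ p) ≤ C := by
  have hρ : 0 < (1 - r ^ 2) ^ p := Real.rpow_pos_of_pos (by nlinarith) p
  rw [← mul_assoc, ← le_div_iff₀ hρ]
  refine hF.norm_coeff_mul_le_of_norm_deriv_le hr₀ hr₁ (fun z hz ↦ ?_) hn
  rw [mem_sphere_zero_iff_norm] at hz
  rw [le_div_iff₀ hρ, ← hz]
  exact hC z (mem_ball_zero_iff.2 (hz ▸ hr₁))

theorem norm_deriv_mul_one_sub_sq_rpow_le {ν M : ℝ} {h g : ℂ → ℂ}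
    (hh : DifferentiableOn ℂ h (ball 0 1)) (hg : DifferentiableOn ℂ g (ball 0 1))
    (hsp : ∀ z ∈ ball (0 : ℂ) 1, ‖deriv g z‖ < ‖deriv h z‖)
    (hM : ∀ z ∈ ball (0 : ℂ) 1,
      (1 - ‖z‖ ^ 2) ^ ν * Real.sqrt |‖deriv h z‖ ^ 2 - ‖deriv g z‖ ^ 2| ≤ M)
    {z : ℂ} (hz : z ∈ ball (0 : ℂ) 1) :
    ‖deriv h z‖ * (1 - ‖z‖ ^ 2) ^ (ν + 1 / 2) ≤
      M * Real.sqrt ((1 + ‖deriv g 0 / deriv h 0‖) / (1 - ‖deriv g 0 / deriv h 0‖)) := by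
  have hne : ∀ u ∈ ball (0 : ℂ) 1, deriv h u ≠ 0 := fun u hu ↦
    norm_pos_iff.1 ((norm_nonneg _).trans_lt (hsp u hu))
  set ω : ℂ → ℂ := fun u ↦ deriv g u / deriv h u
  have hω : DifferentiableOn ℂ ω (ball 0 1) :=
    (hg.deriv isOpen_ball).div (hh.deriv isOpen_ball) hne
  have hmaps : MapsTo ω (ball 0 1) (ball 0 1) := fun u hu ↦ by
    rw [mem_ball_zero_iff, norm_div, div_lt_one (norm_pos_iff.2 (hne u hu))]
    exact hsp u hu
  set q := (1 + ‖ω 0‖) / (1 - ‖ω 0‖)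
  set X := ‖deriv h z‖
  set Y := ‖deriv g z‖
  set ρ := 1 - ‖z‖ ^ 2
  have hX : 0 < X := norm_pos_iff.2 (hne z hz)
  have hρ : 0 < ρ := by have := mem_ball_zero_iff.1 hz; nlinarith [norm_nonneg z]
  have hJ : 0 ≤ X ^ 2 - Y ^ 2 := by nlinarith [hsp z hz, norm_nonneg (deriv g z)]
  have hω_sq : X ^ 2 * (1 - ‖ω z‖ ^ 2) = X ^ 2 - Y ^ 2 := by
    rw [show ‖ω z‖ = Y / X from norm_div _ _]
    field_simp
  have hpick : X ^ 2 * ρ ≤ (X ^ 2 - Y ^ 2) * q := by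
    calc X ^ 2 * ρ ≤ X ^ 2 * ((1 - ‖ω z‖ ^ 2) * q) :=
          mul_le_mul_of_nonneg_left (one_sub_sq_norm_le_of_mapsTo_ball hω hmaps hz) (sq_nonneg X)
      _ = (X ^ 2 - Y ^ 2) * q := by rw [← mul_assoc, hω_sq]
  calc X * ρ ^ (ν + 1 / 2) = ρ ^ ν * Real.sqrt (X ^ 2 * ρ) := by
        rw [Real.rpow_add hρ, Real.sqrt_mul (sq_nonneg X), Real.sqrt_sq hX.le,
          Real.sqrt_eq_rpow]
        ring
    _ ≤ ρ ^ ν * Real.sqrt ((X ^ 2 - Y ^ 2) * q) := by gcongr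
    _ = ρ ^ ν * Real.sqrt |X ^ 2 - Y ^ 2| * Real.sqrt q := by
        rw [abs_of_nonneg hJ, Real.sqrt_mul hJ]
        ring
    _ ≤ M * Real.sqrt q := by gcongr; exact hM z hz

theorem HasFPowerSeriesOnBall.norm_coeff_le_of_norm_deriv_mul_rpow_le {F : ℂ → ℂ} {c : ℕ → ℂ}
    {ν C : ℝ} (hF : HasFPowerSeriesOnBall F (.ofScalars ℂ c) 0 (.ofReal 1)) (hν : 0 ≤ ν)
    (hC : ∀ z ∈ ball (0 : ℂ) 1, ‖deriv F z‖ * (1 - ‖z‖ ^ 2) ^ (ν + 1 / 2) ≤ C) {n : ℕ}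
    (hn : 2 ≤ n) :
    ‖c n‖ ≤ C * (Real.exp 1 / (2 * ν + 1)) ^ (ν + 1 / 2) * ((n : ℝ) + 2 * ν) ^ (ν - 1 / 2) := by
  have hN : (2 : ℝ) ≤ n := by exact_mod_cast hn
  set r := Real.sqrt ((n - 1) / (n + 2 * ν))
  have hr₂ : r ^ 2 = (n - 1) / (n + 2 * ν) := Real.sq_sqrt (div_nonneg (by linarith) (by linarith))
  have hr₀ : 0 < r := Real.sqrt_pos.2 (div_pos (by linarith) (by linarith))
  have hr₁ : r < 1 := by
    have : r ^ 2 < 1 := by rw [hr₂, div_lt_one (by linarith)]; linarith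
    nlinarith
  set E := (Real.exp 1 / (2 * ν + 1)) ^ (ν + 1 / 2) * ((n : ℝ) + 2 * ν) ^ (ν - 1 / 2)
  set P := n * r ^ (n - 1) * (1 - r ^ 2) ^ (ν + 1 / 2)
  calc ‖c n‖ ≤ ‖c n‖ * (E * P) :=
        le_mul_of_one_le_right (norm_nonneg _) (one_le_mul_rpow_mul_pow_mul_rpow hν hn hr₀.le hr₂)
    _ = E * (‖c n‖ * P) := by ring
    _ ≤ E * C := by
        gcongr
        exact hF.norm_coeff_mul_le_of_norm_deriv_mul_rpow_le hC hr₀ hr₁ (by omega)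
    _ = _ := by ring

lemma norm_le_div_sqrt_one_sub_sq_norm_div {p q : ℂ} {M : ℝ} (hqp : ‖q‖ < ‖p‖)
    (hM : Real.sqrt |‖p‖ ^ 2 - ‖q‖ ^ 2| ≤ M) :
    ‖p‖ ≤ M / Real.sqrt (1 - ‖q / p‖ ^ 2) := by
  have hp : 0 < ‖p‖ := (norm_nonneg _).trans_lt hqp
  have hqp' : ‖q / p‖ < 1 := by rw [norm_div, div_lt_one hp]; exact hqp
  have hsq : ‖p‖ * Real.sqrt (1 - ‖q / p‖ ^ 2) = Real.sqrt |‖p‖ ^ 2 - ‖q‖ ^ 2| := by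
    rw [abs_of_nonneg (by nlinarith [norm_nonneg q]), ← Real.sqrt_sq hp.le,
      ← Real.sqrt_mul (sq_nonneg _), Real.sqrt_sq hp.le, norm_div]
    congr 1
    field_simp
  rwa [le_div_iff₀ (Real.sqrt_pos.2 (by nlinarith [norm_nonneg (q / p)])), hsq]

theorem coefficient_estimates_Bloch_type_general
    (ν : ℝ) (hν : 0 < ν) (h g : ℂ → ℂ) (a b : ℕ → ℂ)
    (hh : DifferentiableOn ℂ h (ball 0 1))
    (hg : DifferentiableOn ℂ g (ball 0 1))
    (ha : ∀ z ∈ ball (0 : ℂ) 1, HasSum (fun n : ℕ => a n * z ^ n) (h z))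
    (hb : ∀ z ∈ ball (0 : ℂ) 1, HasSum (fun n : ℕ => b n * z ^ n) (g z))
    (hsp : ∀ z ∈ ball (0 : ℂ) 1, ‖deriv g z‖ < ‖deriv h z‖)
    (M : ℝ)
    (hM : ∀ z ∈ ball (0 : ℂ) 1,
      (1 - ‖z‖ ^ 2) ^ ν *
        Real.sqrt |‖deriv h z‖ ^ 2 - ‖deriv g z‖ ^ 2| ≤ M) :
    ‖b 1‖ < ‖a 1‖ ∧
    ‖a 1‖ ≤ M / Real.sqrt (1 - ‖deriv g 0 / deriv h 0‖ ^ 2) ∧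
    (∀ n : ℕ, 2 ≤ n →
      max (‖a n‖) (‖b n‖)
        ≤ M * (Real.exp 1 / (2 * ν + 1)) ^ (ν + 1 / 2) *
          Real.sqrt ((1 + ‖deriv g 0 / deriv h 0‖)
            / (1 - ‖deriv g 0 / deriv h 0‖)) *
          ((n : ℝ) + 2 * ν) ^ (ν - 1 / 2)) := by
  have h₀ : (0 : ℂ) ∈ ball (0 : ℂ) 1 := mem_ball_self one_pos
  have hA := hasFPowerSeriesOnBall_ofScalars_of_hasSum one_pos ha
  have hB := hasFPowerSeriesOnBall_ofScalars_of_hasSum one_pos hb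
  have ha₁ : deriv h 0 = a 1 := by
    simpa using hA.hasFPowerSeriesAt.iteratedDeriv_eq_factorial_mul 1
  have hb₁ : deriv g 0 = b 1 := by
    simpa using hB.hasFPowerSeriesAt.iteratedDeriv_eq_factorial_mul 1
  refine ⟨ha₁ ▸ hb₁ ▸ hsp 0 h₀, ?_, fun n hn ↦ ?_⟩
  · rw [← ha₁]
    exact norm_le_div_sqrt_one_sub_sq_norm_div (hsp 0 h₀) (by simpa using hM 0 h₀)
  have hbound_h := fun z hz ↦ norm_deriv_mul_one_sub_sq_rpow_le hh hg hsp hM (z := z) hz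
  have hbound_g : ∀ z ∈ ball (0 : ℂ) 1, ‖deriv g z‖ * (1 - ‖z‖ ^ 2) ^ (ν + 1 / 2) ≤
      M * Real.sqrt ((1 + ‖deriv g 0 / deriv h 0‖) / (1 - ‖deriv g 0 / deriv h 0‖)) := by
    refine fun z hz ↦ (mul_le_mul_of_nonneg_right (hsp z hz).le (Real.rpow_nonneg ?_ _)).trans
      (hbound_h z hz)
    nlinarith [mem_ball_zero_iff.1 hz, norm_nonneg z]
  refine max_le ?_ ?_
  · exact (hA.norm_coeff_le_of_norm_deriv_mul_rpow_le hν.le hbound_h hn).trans_eq (by ring)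
  · exact (hB.norm_coeff_le_of_norm_deriv_mul_rpow_le hν.le hbound_g hn).trans_eq (by ring)

/-- Coefficient estimates: if `f = h + conj g` is a sense-preserving harmonic mapping
on `𝔻` with `β*_ν(f) ≤ M`, dilatation `ω_f = g'/h'`, and Taylor expansions
`h(z) = Σ aₙ zⁿ`, `g(z) = Σ bₙ zⁿ`, then `|b₁| < |a₁| ≤ M/√(1 − |ω_f(0)|²)` and for
all `n ≥ 2`, `max{|aₙ|, |bₙ|} ≤ M (e/(2ν+1))^{ν+1/2} √((1+|ω_f(0)|)/(1−|ω_f(0)|)) (n+2ν)^{ν−1/2}`. -/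
theorem coefficient_estimates_Bloch_type
    (ν : ℝ) (hν : 0 < ν) (h g : ℂ → ℂ) (a b : ℕ → ℂ)
    (hh : DifferentiableOn ℂ h (ball 0 1))
    (hg : DifferentiableOn ℂ g (ball 0 1))
    (hg0 : g 0 = 0)
    (ha : ∀ z ∈ ball (0 : ℂ) 1, HasSum (fun n : ℕ => a n * z ^ n) (h z))
    (hb : ∀ z ∈ ball (0 : ℂ) 1, HasSum (fun n : ℕ => b n * z ^ n) (g z))
    (hsp : ∀ z ∈ ball (0 : ℂ) 1, ‖deriv g z‖ < ‖deriv h z‖)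
    (M : ℝ)
    (hM : ∀ z ∈ ball (0 : ℂ) 1,
      (1 - ‖z‖ ^ 2) ^ ν *
        Real.sqrt |‖deriv h z‖ ^ 2 - ‖deriv g z‖ ^ 2| ≤ M) :
    ‖b 1‖ < ‖a 1‖ ∧
    ‖a 1‖ ≤ M / Real.sqrt (1 - ‖deriv g 0 / deriv h 0‖ ^ 2) ∧
    (∀ n : ℕ, 2 ≤ n →
      max (‖a n‖) (‖b n‖)
        ≤ M * (Real.exp 1 / (2 * ν + 1)) ^ (ν + 1 / 2) *
          Real.sqrt ((1 + ‖deriv g 0 / deriv h 0‖)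
            / (1 - ‖deriv g 0 / deriv h 0‖)) *
          ((n : ℝ) + 2 * ν) ^ (ν - 1 / 2)) :=
  coefficient_estimates_Bloch_type_general ν hν h g a b hh hg ha hb hsp M hM
end
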